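/- arXiv:0912.0431 — 2 statements merged into one kernel-verified Lean document; each statement's English description precedes it below -/
import Mathlib

section
/- Let T be a normal Souslin tree and suppose T is 2-free, i.e., for any two distinct nodes s, t of the same height the tree product T(s) ⊗ T(t) satisfies the countable chain condition. Then T is totally rigid: for all pairs of distinct nodes s, t of T of the same height, the trees T(s) and T(t) are not isomorphic. -/
open Cardinal Ordinal Set

universe u

variable {α : Type u}

/-- `ht` is the height function of a tree order on `α`: predecessors of each node form a
chain (together with well-foundedness of `Ordinal`-valued height this means they are
well-ordered), heights are strictly monotone, and below each node every smaller ordinal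
is realized as the height of a predecessor. -/
structure IsTreeHt [PartialOrder α] (ht : α → Ordinal) : Prop where
  pred_chain : ∀ t : α, IsChain (· < ·) (Set.Iio t)
  ht_lt : ∀ s t : α, s < t → ht s < ht t
  ht_onto : ∀ t : α, ∀ β, β < ht t → ∃ s, s < t ∧ ht s = β

/-- Normality: unique root below everything, at least two immediate successors, successors
in every higher nonempty level, unique limits. -/
def IsNormalTree [PartialOrder α] (ht : α → Ordinal) : Prop :=
  (∃ r : α, ∀ t, r ≤ t) ∧
  (∀ t : α, ∃ s u : α, t < s ∧ t < u ∧ s ≠ u ∧ ht s = ht t + 1 ∧ ht u = ht t + 1) ∧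
  (∀ t : α, ∀ β, ht t < β → (∃ u : α, ht u = β) → ∃ s, t < s ∧ ht s = β) ∧
  (∀ s t : α, ht s = ht t → Order.IsSuccLimit (ht s) → Set.Iio s = Set.Iio t → s = t)

/-- Every node has exactly ℵ₀ immediate successors. -/
def Aleph0Splitting [PartialOrder α] (ht : α → Ordinal) : Prop :=
  ∀ t : α, {s | t < s ∧ ht s = ht t + 1}.Infinite ∧ {s | t < s ∧ ht s = ht t + 1}.Countable

/-- A Souslin tree: a tree of height ω₁ all of whose antichains and chains are countable. -/
def IsSouslinTree [PartialOrder α] (ht : α → Ordinal) : Prop :=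
  IsTreeHt ht ∧
  (∀ t : α, ht t < (Cardinal.aleph 1).ord) ∧
  (∀ β, β < (Cardinal.aleph 1).ord → ∃ t : α, ht t = β) ∧
  (∀ A : Set α, IsAntichain (· ≤ ·) A → A.Countable) ∧
  (∀ C : Set α, IsChain (· ≤ ·) C → C.Countable)


/-!
An isomorphism `f : T(s) ≃o T(t)` between subtrees rooted at the same height preserves heights.
Pick two distinct immediate successors `a x ≠ b x` of every node `x ≥ s`. The pairs
`(a x, f (b x))` then form an antichain of `T(s) ⊗ T(t)`: if `(a x, f (b x)) ≤ (a y, f (b y))`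
with `x ≠ y`, then `a x` and `b x` both lie below `y` and have the same height, so they coincide.
Since `T(s)` meets each of the uncountably many levels above `s`, this antichain is uncountable.
-/

open Function

def IsImmediateSucc [PartialOrder α] (ht : α → Ordinal) (x y : α) : Prop :=
  x < y ∧ ht y = ht x + 1

theorem countable_Iio_ordinal_iff {o : Ordinal} : (Iio o).Countable ↔ o < (aleph 1).ord := by
  rw [← le_aleph0_iff_set_countable, Cardinal.mk_Iio_ordinal, lift_le_aleph0, lt_ord,
    lt_aleph_one_iff]

theorem not_countable_Ico_ord_aleph_one {o : Ordinal} (ho : o < (aleph 1).ord) :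
    ¬ (Ico o (aleph 1).ord).Countable := fun h => by
  have := (countable_Iio_ordinal_iff.mpr ho).union h
  rw [Iio_union_Ico_eq_Iio ho.le, countable_Iio_ordinal_iff] at this
  exact this.false

namespace IsTreeHt

variable [PartialOrder α] {ht : α → Ordinal} {s t u v w x x' a a' b b' y : α}

theorem strictMono (hT : IsTreeHt ht) : StrictMono ht := hT.ht_lt

theorem le_of_le_of_le (hT : IsTreeHt ht) (hu : u ≤ w) (hv : v ≤ w) (h : ht u ≤ ht v) :
    u ≤ v := by
  obtain hv | rfl := hv.lt_or_eq
  · obtain hu | rfl := hu.lt_or_eq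
    · obtain rfl | hne := eq_or_ne u v
      · exact le_rfl
      · exact ((hT.pred_chain w hu hv hne).resolve_right
          fun hvu => (hT.ht_lt _ _ hvu).not_ge h).le
    · exact ((hT.ht_lt _ _ hv).not_ge h).elim
  · exact hu

theorem eq_of_le_of_le (hT : IsTreeHt ht) (hu : u ≤ w) (hv : v ≤ w) (h : ht u = ht v) :
    u = v :=
  (hT.le_of_le_of_le hu hv h.le).antisymm (hT.le_of_le_of_le hv hu h.ge)

theorem le_or_lt_of_le_of_lt (hT : IsTreeHt ht) (hs : s ≤ x) (hy : y < x) :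
    s ≤ y ∨ y < s := by
  rcases le_total (ht s) (ht y) with h | h
  · exact .inl (hT.le_of_le_of_le hs hy.le h)
  · obtain hys | rfl := (hT.le_of_le_of_le hy.le hs h).lt_or_eq
    · exact .inr hys
    · exact .inl le_rfl

theorem Iio_ht_eq_union (hT : IsTreeHt ht) (x : {x : α // s ≤ x}) :
    Iio (ht x) = Iio (ht s) ∪ (fun y : {x : α // s ≤ x} => ht y) '' Iio x := by
  ext β
  simp only [mem_union, mem_Iio, mem_image]
  constructor
  · intro hβ
    obtain ⟨y, hyx, rfl⟩ := hT.ht_onto x β hβ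
    rcases hT.le_or_lt_of_le_of_lt x.2 hyx with hsy | hys
    · exact .inr ⟨⟨y, hsy⟩, hyx, rfl⟩
    · exact .inl (hT.ht_lt _ _ hys)
  · rintro (hβ | ⟨y, hyx, rfl⟩)
    · exact hβ.trans_le (hT.strictMono.monotone x.2)
    · exact hT.ht_lt _ _ hyx

theorem ht_orderIso_apply (hT : IsTreeHt ht) (hst : ht s = ht t)
    (f : {x : α // s ≤ x} ≃o {x : α // t ≤ x}) (x : {x : α // s ≤ x}) :
    ht (f x : α) = ht x := by
  induction x using (InvImage.wf (fun x : {x : α // s ≤ x} => ht x) wellFounded_lt).induction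
    with | _ x IH => ?_
  suffices Iio (ht (f x : α)) = Iio (ht x) from eq_of_forall_lt_iff (Set.ext_iff.mp this)
  rw [hT.Iio_ht_eq_union (f x), hT.Iio_ht_eq_union x, ← f.image_Iio, image_image, hst]
  congr 1
  exact image_congr fun y hy => IH y (hT.ht_lt _ _ hy)

theorem le_of_isImmediateSucc_le (hT : IsTreeHt ht) (ha : IsImmediateSucc ht x a)
    (ha' : IsImmediateSucc ht x' a') (h : a ≤ a') (hx : ht x < ht x') : a ≤ x' :=
  hT.le_of_le_of_le h ha'.1.le (ha.2 ▸ Order.add_one_le_of_lt hx)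

theorem eq_of_isImmediateSucc_pair_le (hT : IsTreeHt ht) (ha : IsImmediateSucc ht x a)
    (hb : IsImmediateSucc ht x b) (hab : a ≠ b) (ha' : IsImmediateSucc ht x' a')
    (hb' : IsImmediateSucc ht x' b') (hle_a : a ≤ a') (hle_b : b ≤ b') : x = x' := by
  have hx : ht x ≤ ht x' := by
    have h := hT.strictMono.monotone hle_a
    rw [ha.2, ha'.2] at h
    exact Order.le_of_succ_le_succ h
  obtain hx | hx := hx.lt_or_eq
  · exact absurd (hT.eq_of_le_of_le (hT.le_of_isImmediateSucc_le ha ha' hle_a hx)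
      (hT.le_of_isImmediateSucc_le hb hb' hle_b hx) (ha.2.trans hb.2.symm)) hab
  · obtain rfl : a = a' := hT.eq_of_le_of_le hle_a le_rfl (by rw [ha.2, ha'.2, hx])
    exact hT.eq_of_le_of_le ha.1.le ha'.1.le hx

theorem exists_injective_antichain_of_orderIso (hT : IsTreeHt ht)
    (hsplit : ∀ x, ∃ a b, IsImmediateSucc ht x a ∧ IsImmediateSucc ht x b ∧ a ≠ b)
    (hst : ht s = ht t) (f : {x : α // s ≤ x} ≃o {x : α // t ≤ x}) :
    ∃ g : {x : α // s ≤ x} → α × α, Injective g ∧ IsAntichain (· ≤ ·) (range g) ∧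
      ∀ p ∈ range g, s ≤ p.1 ∧ t ≤ p.2 ∧ ht p.1 = ht p.2 := by
  choose a b ha hb hab using hsplit
  let g : {x : α // s ≤ x} → α × α := fun x => (a x, f ⟨b x, x.2.trans (hb x).1.le⟩)
  have key : ∀ x y, g x ≤ g y → x = y := fun x y hxy =>
    Subtype.ext <| hT.eq_of_isImmediateSucc_pair_le (ha x) (hb x) (hab x) (ha y) (hb y) hxy.1
      (f.le_iff_le.mp hxy.2)
  refine ⟨g, fun x y h => key x y h.le, ?_, ?_⟩
  · rintro _ ⟨x, rfl⟩ _ ⟨y, rfl⟩ hne hle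
    exact hne (congrArg g (key x y hle))
  · rintro _ ⟨x, rfl⟩
    exact ⟨x.2.trans (ha x).1.le, (f _).2,
      by rw [(ha x).2, hT.ht_orderIso_apply hst f, (hb x).2]⟩

end IsTreeHt

theorem not_countable_Ici_of_levels [PartialOrder α] {ht : α → Ordinal} {s : α}
    (hlev : ∀ β < (aleph 1).ord, ∃ u : α, ht u = β)
    (hext : ∀ (t : α) β, ht t < β → (∃ u : α, ht u = β) → ∃ x, t < x ∧ ht x = β)
    (hs : ht s < (aleph 1).ord) : ¬ (Ici s).Countable := fun h => by
  refine not_countable_Ico_ord_aleph_one hs ((h.image ht).mono ?_)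
  rintro β ⟨hsβ, hβ⟩
  obtain hsβ | rfl := hsβ.lt_or_eq
  · obtain ⟨x, hsx, rfl⟩ := hext s β hsβ (hlev β hβ)
    exact ⟨x, hsx.le, rfl⟩
  · exact ⟨s, le_rfl, rfl⟩

theorem two_free_implies_totally_rigid_general [PartialOrder α] (ht : α → Ordinal)
    (hS : IsSouslinTree ht) (hN : IsNormalTree ht)
    (h2free : ∀ s t : α, ht s = ht t → s ≠ t →
      ∀ A : Set (α × α), (∀ p ∈ A, s ≤ p.1 ∧ t ≤ p.2 ∧ ht p.1 = ht p.2) →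
        IsAntichain (· ≤ ·) A → A.Countable) :
    ∀ s t : α, ht s = ht t → s ≠ t →
      IsEmpty ({x : α // s ≤ x} ≃o {x : α // t ≤ x}) := by
  intro s t hst hne
  refine ⟨fun f => ?_⟩
  obtain ⟨hT, hlt, hlev, -, -⟩ := hS
  obtain ⟨-, hsplit, hext, -⟩ := hN
  obtain ⟨g, hg, hanti, hpairs⟩ := hT.exists_injective_antichain_of_orderIso
    (fun x => by
      obtain ⟨a, b, hxa, hxb, hab, ha, hb⟩ := hsplit x
      exact ⟨a, b, ⟨hxa, ha⟩, ⟨hxb, hb⟩, hab⟩) hst f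
  have : Countable (range g) := (h2free s t hst hne _ hpairs hanti).to_subtype
  exact not_countable_Ici_of_levels hlev hext (hlt s)
    (countable_coe_iff.mp (Countable.of_equiv _ (Equiv.ofInjective g hg).symm))

/-- A 2-free normal Souslin tree is totally rigid: subtrees above distinct nodes of the
same height are never isomorphic. -/
theorem two_free_implies_totally_rigid [PartialOrder α] (ht : α → Ordinal)
    (hS : IsSouslinTree ht) (hN : IsNormalTree ht) (hA : Aleph0Splitting ht)
    (h2free : ∀ s t : α, ht s = ht t → s ≠ t →
      ∀ A : Set (α × α), (∀ p ∈ A, s ≤ p.1 ∧ t ≤ p.2 ∧ ht p.1 = ht p.2) →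
        IsAntichain (· ≤ ·) A → A.Countable) :
    ∀ s t : α, ht s = ht t → s ≠ t →
      IsEmpty ({x : α // s ≤ x} ≃o {x : α // t ≤ x}) :=
  two_free_implies_totally_rigid_general ht hS hN h2free
end

section
/- Let T be a strongly homogeneous Souslin tree. Then the automorphism group of T has exactly 2^{ℵ₀} elements. -/
open Cardinal Ordinal Set

universe u

variable {α : Type u}

/-- A coherent family of isomorphisms `ψ s t : T(s) → T(t)` witnessing strong
homogeneity: each `ψ s t` is a height-preserving order isomorphism of the subtrees above
`s` and `t`, `ψ s s` is the identity, the family is commutative, coherent and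
transitive. -/
structure CoherentFam [PartialOrder α] (ht : α → Ordinal) (ψ : α → α → α → α) : Prop where
  maps : ∀ s t x : α, ht s = ht t → s ≤ x → t ≤ ψ s t x ∧ ht (ψ s t x) = ht x
  mono : ∀ s t x y : α, ht s = ht t → s ≤ x → s ≤ y → (x ≤ y ↔ ψ s t x ≤ ψ s t y)
  surj : ∀ s t z : α, ht s = ht t → t ≤ z → ∃ x : α, s ≤ x ∧ ψ s t x = z
  refl : ∀ s x : α, s ≤ x → ψ s s x = x
  comm : ∀ r s t x : α, ht r = ht s → ht s = ht t → r ≤ x → ψ s t (ψ r s x) = ψ r t x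
  coh : ∀ r s t x : α, ht r = ht s → r ≤ t → t ≤ x → ψ t (ψ r s t) x = ψ r s x
  trans : ∀ t u : α, ht t = ht u → Order.IsSuccLimit (ht t) →
    ∃ γ, γ < ht t ∧ ∀ r s : α, r ≤ t → s ≤ u → ht r = γ → ht s = γ → ψ r s t = u

/-
Call a node `r` good for an automorphism `σ` if `σ` coincides with `ψ r (σ r)` on the cone
above `r`. By transitivity at limit levels, if `σ` disagrees with the coherent family above
`r`, it first does so at a successor level. If no node above `t` were good, such deviations
would be cofinal above `t`; closing a countable limit level `l` under the height bounds of
countable maximal antichains of deviations, a node of height `l` is reached from below by a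
member of the family (transitivity again) and yet lies above a deviation higher up than
where that agreement starts. So good nodes are dense, a countable maximal antichain of them
meets every branch, and `σ` is determined by its values on it: at most `𝔠 ^ ℵ₀ = 𝔠`
automorphisms, since the tree has at most `ℵ₁` nodes. Conversely, permuting the `ℵ₀`
immediate successors of one node and moving their cones along `ψ` yields `2 ^ ℵ₀`
automorphisms.
-/

universe v

namespace IsTreeHt

variable [PartialOrder α] {ht : α → Ordinal} (hT : IsTreeHt ht)
include hT

theorem ht_mono : Monotone ht := fun _ _ h =>
  h.lt_or_eq.elim (fun h => (hT.ht_lt _ _ h).le) fun h => h ▸ le_rfl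

theorem le_total_of_le {a b c : α} (ha : a ≤ c) (hb : b ≤ c) : a ≤ b ∨ b ≤ a := by
  rcases ha.lt_or_eq with ha | rfl
  · rcases hb.lt_or_eq with hb | rfl
    · rcases eq_or_ne a b with rfl | hne
      · exact Or.inl le_rfl
      · exact (hT.pred_chain c ha hb hne).imp le_of_lt le_of_lt
    · exact Or.inl ha.le
  · exact Or.inr hb

theorem eq_of_le_of_ht_eq {a b : α} (hab : a ≤ b) (h : ht a = ht b) : a = b :=
  hab.eq_or_lt.resolve_right fun hlt => (hT.ht_lt _ _ hlt).ne h

theorem le_of_le_of_ht_le {a b c : α} (ha : a ≤ c) (hb : b ≤ c) (h : ht a ≤ ht b) : a ≤ b :=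
  (hT.le_total_of_le ha hb).elim id fun hba => (hT.eq_of_le_of_ht_eq hba
    ((hT.ht_mono hba).antisymm h)).ge

theorem eq_of_le_of_le_of_ht_eq {a b c : α} (ha : a ≤ c) (hb : b ≤ c) (h : ht a = ht b) :
    a = b :=
  (hT.le_of_le_of_ht_le ha hb h.le).antisymm (hT.le_of_le_of_ht_le hb ha h.ge)

theorem exists_le_ht_eq {z : α} {β : Ordinal} (h : β ≤ ht z) : ∃ s, s ≤ z ∧ ht s = β := by
  rcases h.lt_or_eq with h | h
  · obtain ⟨s, hs, rfl⟩ := hT.ht_onto z β h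
    exact ⟨s, hs.le, rfl⟩
  · exact ⟨z, le_rfl, h.symm⟩

theorem le_of_lt_of_ht_eq_add_one {z w s : α} (hz : z < s) (hw : w < s)
    (hs : ht s = ht w + 1) : z ≤ w := by
  refine hT.le_of_le_of_ht_le hz.le hw.le ?_
  rw [← Order.lt_add_one_iff, ← hs]
  exact hT.ht_lt _ _ hz

theorem ht_apply_le (σ : α ≃o α) (t : α) : ht (σ t) ≤ ht t := by
  induction hβ : ht t using WellFoundedLT.induction generalizing t with
  | _ β ih =>
    by_contra! hlt
    obtain ⟨s', hs', hht⟩ := hT.ht_onto (σ t) β (hβ ▸ hlt)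
    have hs : σ.symm s' < t := by simpa using σ.symm.strictMono hs'
    have hlt' : ht (σ.symm s') < β := hβ ▸ hT.ht_lt _ _ hs
    exact (ih _ hlt' _ rfl).not_gt (by simpa [hht] using hlt')

theorem ht_apply (σ : α ≃o α) (t : α) : ht (σ t) = ht t :=
  (hT.ht_apply_le σ t).antisymm <| by simpa using hT.ht_apply_le σ.symm (σ t)

theorem isAntichain_level (β : Ordinal) : IsAntichain (· ≤ ·) {t : α | ht t = β} :=
  fun _ hx _ hy hxy hle => hxy (hT.eq_of_le_of_ht_eq hle (hx.trans hy.symm))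

end IsTreeHt

theorem Ordinal.exists_isSuccLimit_closed {f : Ordinal → Ordinal} (hf : ∀ β, f β < ω₁)
    {a : Ordinal} (ha : a < ω₁) :
    ∃ l, a ≤ l ∧ l < ω₁ ∧ Order.IsSuccLimit l ∧ ∀ γ < l, ∃ β < l, γ < β ∧ f β ≤ l := by
  set g : Ordinal → Ordinal := fun β => max (Order.succ β) (f β)
  have hcof : ∀ γ < nfp g a, ∃ β, γ < β ∧ g β ≤ nfp g a := fun γ hγ => by
    obtain ⟨n, hn⟩ := lt_nfp_iff.1 hγ
    exact ⟨_, hn, by simpa [← Function.iterate_succ_apply'] using iterate_le_nfp g a (n + 1)⟩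
  have hsucc_lt : ∀ γ < nfp g a, Order.succ γ < nfp g a := fun γ hγ => by
    obtain ⟨β, hγβ, hβ⟩ := hcof γ hγ
    exact (Order.succ_le_of_lt hγβ).trans_lt
      ((Order.lt_succ β).trans_le ((le_max_left _ _).trans hβ))
  refine ⟨nfp g a, le_nfp g a, ?_, ?_, fun γ hγ => ?_⟩
  · refine nfp_lt_ord (by simp) (fun β hβ => max_lt ?_ (hf β)) ha
    exact (isSuccLimit_omega 1).succ_lt hβ
  · refine Ordinal.isSuccLimit_iff.2 ⟨?_, Order.isSuccPrelimit_iff_succ_lt.2 hsucc_lt⟩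
    exact ((Order.lt_succ a).trans_le ((le_max_left _ _).trans (iterate_le_nfp g a 1))).ne_bot
  · obtain ⟨β, hγβ, hβ⟩ := hcof γ hγ
    exact ⟨β, (Order.lt_succ β).trans_le ((le_max_left _ _).trans hβ), hγβ,
      (le_max_right _ _).trans hβ⟩

theorem exists_countable_subset_forall_comparable [PartialOrder α]
    (hA : ∀ A : Set α, IsAntichain (· ≤ ·) A → A.Countable) (P : Set α) :
    ∃ M ⊆ P, M.Countable ∧ ∀ p ∈ P, ∃ m ∈ M, m ≤ p ∨ p ≤ m := by
  have hchain : ∀ c ⊆ {A | A ⊆ P ∧ IsAntichain (· ≤ ·) A}, IsChain (· ⊆ ·) c →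
      c.Nonempty → ∃ ub ∈ {A | A ⊆ P ∧ IsAntichain (· ≤ ·) A}, ∀ s ∈ c, s ⊆ ub := by
    refine fun c hc hchain _ => ⟨⋃₀ c, ⟨sUnion_subset fun s hs => (hc hs).1, ?_⟩,
      fun _ => subset_sUnion_of_mem⟩
    rintro x ⟨s, hs, hxs⟩ y ⟨s', hs', hys'⟩
    rcases hchain.total hs hs' with h | h
    · exact (hc hs').2 (h hxs) hys'
    · exact (hc hs).2 hxs (h hys')
  obtain ⟨M, -, hM⟩ := zorn_subset_nonempty _ hchain ∅ ⟨empty_subset P, IsAntichain.empty⟩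
  refine ⟨M, hM.prop.1, hA M hM.prop.2, fun p hp => ?_⟩
  by_contra! hincomp
  have hpM : p ∉ M := fun h => (hincomp p h).1 le_rfl
  refine hpM (hM.mem_of_prop_insert ⟨insert_subset hp hM.prop.1, ?_⟩)
  exact hM.prop.2.insert (fun m hm _ => (hincomp m hm).1) fun m hm _ => (hincomp m hm).2

namespace IsSouslinTree

variable [PartialOrder α] {ht : α → Ordinal.{v}} (hS : IsSouslinTree ht)
include hS

theorem isTreeHt : IsTreeHt ht := hS.1

theorem ht_lt_omega_one (t : α) : ht t < ω₁ := ord_aleph 1 ▸ hS.2.1 t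

theorem countable_of_isAntichain {A : Set α} (hA : IsAntichain (· ≤ ·) A) : A.Countable :=
  hS.2.2.2.1 A hA

theorem exists_le_ht_eq (hN : IsNormalTree ht) {t : α} {β : Ordinal} (h : ht t ≤ β)
    (hβ : β < ω₁) : ∃ z, t ≤ z ∧ ht z = β := by
  rcases h.lt_or_eq with h | rfl
  · obtain ⟨z, hz, rfl⟩ := hN.2.2.1 t β h (hS.2.2.1 β (ord_aleph 1 ▸ hβ))
    exact ⟨z, hz.le, rfl⟩
  · exact ⟨t, le_rfl, rfl⟩

theorem exists_ht_lt_of_countable {s : Set α} (hs : s.Countable) :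
    ∃ β < ω₁, ∀ a ∈ s, ht a < β := by
  have := hs.to_subtype
  refine ⟨⨆ a : s, ht a + 1, Ordinal.iSup_lt_omega_one fun a => ?_, fun a ha => ?_⟩
  · exact (isSuccLimit_omega 1).add_one_lt (hS.ht_lt_omega_one a)
  · exact (Order.lt_add_one_iff.2 le_rfl).trans_le (Ordinal.le_iSup (fun a : s => ht a + 1) ⟨a, ha⟩)

theorem mk_le_continuum : #α ≤ 𝔠 := by
  set f : α → Iio ω₁ := fun t => ⟨ht t, hS.ht_lt_omega_one t⟩
  have hfiber : ∀ β, lift #(f ⁻¹' {β}) ≤ ℵ₀ := fun β => by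
    refine lift_le_aleph0.2 (le_aleph0_iff_set_countable.2 ?_)
    refine (hS.countable_of_isAntichain (hS.isTreeHt.isAntichain_level β)).mono fun t hβt => ?_
    simpa [f, Subtype.ext_iff] using hβt
  have := lift_mk_le_lift_mk_mul_of_lift_mk_preimage_le f hfiber
  rw [Cardinal.mk_Iio_ordinal, card_omega] at this
  simp only [lift_aleph, Ordinal.lift_one] at this
  rw [mul_eq_left (aleph0_le_aleph 1) (aleph0_le_aleph 1) aleph0_ne_zero] at this
  exact Cardinal.lift_le.1 (this.trans (by simpa using aleph_one_le_continuum))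

end IsSouslinTree

section Agreement

variable [PartialOrder α]

def AgreesAt (ψ : α → α → α → α) (σ : α ≃o α) (r z : α) : Prop := σ z = ψ r (σ r) z

def AgreesAbove (ψ : α → α → α → α) (σ : α ≃o α) (r : α) : Prop :=
  ∀ z, r ≤ z → AgreesAt ψ σ r z

def IsDeviation (ht : α → Ordinal) (ψ : α → α → α → α) (σ : α ≃o α) (z : α) : Prop :=
  ∃ w < z, ht z = ht w + 1 ∧ ¬ AgreesAt ψ σ w z

variable {ht : α → Ordinal} {ψ : α → α → α → α}

theorem CoherentFam.apply_self (hT : IsTreeHt ht) (hψ : CoherentFam ht ψ) {s t : α}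
    (h : ht s = ht t) : ψ s t s = t :=
  have hst := hψ.maps s t s h le_rfl
  (hT.eq_of_le_of_ht_eq hst.1 (hst.2.trans h).symm).symm

variable (hT : IsTreeHt ht) (hψ : CoherentFam ht ψ) {σ : α ≃o α}
include hT hψ

theorem agreesAt_self (r : α) : AgreesAt ψ σ r r :=
  (hψ.apply_self hT (hT.ht_apply σ r).symm).symm

theorem AgreesAt.of_le_right {r z z' : α} (hrz : r ≤ z) (hzz' : z ≤ z')
    (h : AgreesAt ψ σ r z') : AgreesAt ψ σ r z := by
  have hσ : ht r = ht (σ r) := (hT.ht_apply σ r).symm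
  have hle : ψ r (σ r) z ≤ σ z' := h ▸ (hψ.mono r (σ r) z z' hσ hrz (hrz.trans hzz')).1 hzz'
  refine hT.eq_of_le_of_le_of_ht_eq (σ.monotone hzz') hle ?_
  rw [(hψ.maps r (σ r) z hσ hrz).2, hT.ht_apply]

theorem AgreesAt.trans {r r' z : α} (hrr' : r ≤ r') (hr'z : r' ≤ z) (h : AgreesAt ψ σ r r')
    (h' : AgreesAt ψ σ r' z) : AgreesAt ψ σ r z := by
  rw [AgreesAt, h', h, hψ.coh r (σ r) r' z (hT.ht_apply σ r).symm hrr' hr'z]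

theorem AgreesAt.of_le_left {r r' z : α} (hrr' : r ≤ r') (hr'z : r' ≤ z)
    (h : AgreesAt ψ σ r z) : AgreesAt ψ σ r' z := by
  rw [AgreesAt, h, h.of_le_right hT hψ hrr' hr'z,
    hψ.coh r (σ r) r' z (hT.ht_apply σ r).symm hrr' hr'z]

theorem exists_agreesAt_of_isSuccLimit {z : α} (hz : Order.IsSuccLimit (ht z)) :
    ∃ r ≤ z, ht r < ht z ∧ AgreesAt ψ σ r z := by
  obtain ⟨γ, hγ, H⟩ := hψ.trans z (σ z) (hT.ht_apply σ z).symm hz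
  obtain ⟨r, hrz, rfl⟩ := hT.exists_le_ht_eq hγ.le
  exact ⟨r, hrz, hγ, (H r (σ r) hrz (σ.monotone hrz) rfl (hT.ht_apply σ r)).symm⟩

theorem agreesAbove_of_forall_not_isDeviation {r : α}
    (h : ∀ z, r < z → ¬ IsDeviation ht ψ σ z) : AgreesAbove ψ σ r := by
  intro z hrz
  induction hβ : ht z using WellFoundedLT.induction generalizing z with
  | _ β ih =>
    rcases hrz.eq_or_lt with rfl | hrz
    · exact agreesAt_self hT hψ r
    rcases Ordinal.zero_or_succ_or_isSuccLimit β with rfl | ⟨δ, rfl⟩ | hlim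
    · exact absurd (hT.ht_lt _ _ hrz) (hβ ▸ not_lt_zero)
    · obtain ⟨w, hwz, hw⟩ := hT.exists_le_ht_eq (hβ ▸ Order.le_succ δ)
      have hzw : ht z = ht w + 1 := by rw [hβ, hw, Order.succ_eq_add_one]
      have hwz' : w < z :=
        hwz.lt_of_ne (by rintro rfl; exact (Order.lt_succ δ).ne (hw.symm.trans hβ))
      have hrw : r ≤ w := hT.le_of_lt_of_ht_eq_add_one hrz hwz' hzw
      have hagree : AgreesAt ψ σ w z := by
        by_contra hne
        exact h z hrz ⟨w, hwz', hzw, hne⟩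
      exact (ih δ (hw ▸ Order.lt_succ δ) w hrw hw).trans hT hψ hrw hwz hagree
    · obtain ⟨r₁, hr₁z, hr₁, hagree⟩ := exists_agreesAt_of_isSuccLimit hT hψ (hβ ▸ hlim)
      rcases hT.le_total_of_le hr₁z hrz.le with hr₁r | hrr₁
      · exact hagree.of_le_left hT hψ hr₁r hrz.le
      · exact (ih _ (hβ ▸ hr₁) r₁ hrr₁ rfl).trans hT hψ hrr₁ hr₁z hagree

end Agreement

theorem OrderIso.ext_of_agreesAbove [PartialOrder α] {ht : α → Ordinal} {ψ : α → α → α → α}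
    (hT : IsTreeHt ht) {σ τ : α ≃o α} {M : Set α} (hM : ∀ z, ∃ m ∈ M, m ≤ z ∨ z ≤ m)
    (hσ : ∀ m ∈ M, AgreesAbove ψ σ m) (hτ : ∀ m ∈ M, AgreesAbove ψ τ m)
    (heq : ∀ m ∈ M, σ m = τ m) : σ = τ := by
  ext z
  obtain ⟨m, hm, hmz | hzm⟩ := hM z
  · rw [hσ m hm z hmz, hτ m hm z hmz, heq m hm]
  · refine hT.eq_of_le_of_le_of_ht_eq ((σ.monotone hzm).trans_eq (heq m hm)) (τ.monotone hzm) ?_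
    rw [hT.ht_apply, hT.ht_apply]

section Souslin

variable [PartialOrder α] {ht : α → Ordinal.{v}} {ψ : α → α → α → α}
  (hS : IsSouslinTree ht) (hN : IsNormalTree ht) (hψ : CoherentFam ht ψ)
include hS hN hψ

theorem exists_isDeviation_of_forall_not_agreesAbove {σ : α ≃o α} {t : α}
    (hbad : ∀ r, t ≤ r → ¬ AgreesAbove ψ σ r) {x : α} (hx : t ≤ x) {β : Ordinal} (hβ : β < ω₁) :
    ∃ z, x < z ∧ β < ht z ∧ IsDeviation ht ψ σ z := by
  obtain ⟨x', hxx', hx'⟩ := hS.exists_le_ht_eq hN ((le_max_right β (ht x)).trans (Order.le_succ _))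
    ((isSuccLimit_omega 1).succ_lt (max_lt hβ (hS.ht_lt_omega_one x)))
  have hβx' : β < ht x' := hx' ▸ (le_max_left β (ht x)).trans_lt (Order.lt_succ _)
  have hnot := mt (agreesAbove_of_forall_not_isDeviation hS.isTreeHt hψ) (hbad x' (hx.trans hxx'))
  push Not at hnot
  obtain ⟨z, hx'z, hz⟩ := hnot
  exact ⟨z, hxx'.trans_lt hx'z, hβx'.trans (hS.isTreeHt.ht_lt _ _ hx'z), hz⟩

theorem exists_agreesAbove_ge (σ : α ≃o α) (t : α) : ∃ r, t ≤ r ∧ AgreesAbove ψ σ r := by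
  have hT := hS.isTreeHt
  by_contra! hbad
  set D : Ordinal → Set α := fun β => {z | t ≤ z ∧ β < ht z ∧ IsDeviation ht ψ σ z}
  choose M hMD hMc hMcomp using fun β =>
    exists_countable_subset_forall_comparable (fun _ => hS.countable_of_isAntichain) (D β)
  choose bnd hbnd hMbnd using fun β => hS.exists_ht_lt_of_countable (hMc β)
  obtain ⟨l, htl, hl, hlim, hclosed⟩ :=
    Ordinal.exists_isSuccLimit_closed hbnd (hS.ht_lt_omega_one t)
  obtain ⟨zs, htzs, rfl⟩ := hS.exists_le_ht_eq hN htl hl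
  obtain ⟨r, hrzs, hr, hagree⟩ := exists_agreesAt_of_isSuccLimit hT hψ hlim
  obtain ⟨β, hβl, hrβ, hβ⟩ := hclosed _ hr
  obtain ⟨d, hzsd, hβd, hd⟩ :=
    exists_isDeviation_of_forall_not_agreesAbove hS hN hψ hbad htzs (hβl.trans hl)
  obtain ⟨m, hm, hmd⟩ := hMcomp β d ⟨htzs.trans hzsd.le, hβd, hd⟩
  obtain ⟨-, hβm, w, hwm, hmw, hnot⟩ := hMD β hm
  -- `l` is closed under `bnd`, so the whole antichain `M β` lies below level `l`.
  have hmzs_ht : ht m < ht zs := (hMbnd β m hm).trans_le hβ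
  have hmzs : m ≤ zs := by
    rcases hmd with hmd | hdm
    · exact hT.le_of_le_of_ht_le hmd hzsd.le hmzs_ht.le
    · exact absurd (hT.ht_lt _ _ (hzsd.trans_le hdm)) hmzs_ht.not_gt
  have hrw : r ≤ w := hT.le_of_le_of_ht_le hrzs (hwm.le.trans hmzs)
    (Order.lt_add_one_iff.1 (hmw ▸ hrβ.trans hβm))
  exact hnot ((hagree.of_le_left hT hψ hrw (hwm.le.trans hmzs)).of_le_right hT hψ hwm.le hmzs)

theorem exists_countable_agreesAbove_cover (σ : α ≃o α) :
    ∃ M : Set α, M.Countable ∧ (∀ z, ∃ m ∈ M, m ≤ z ∨ z ≤ m) ∧ ∀ m ∈ M, AgreesAbove ψ σ m := by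
  obtain ⟨M, hMP, hMc, hMcomp⟩ := exists_countable_subset_forall_comparable
    (fun _ => hS.countable_of_isAntichain) {r | AgreesAbove ψ σ r}
  refine ⟨M, hMc, fun z => ?_, hMP⟩
  obtain ⟨r, hzr, hr⟩ := exists_agreesAbove_ge hS hN hψ σ z
  obtain ⟨m, hm, hmr | hrm⟩ := hMcomp r hr
  · exact ⟨m, hm, hS.isTreeHt.le_total_of_le hmr hzr⟩
  · exact ⟨m, hm, Or.inr (hzr.trans hrm)⟩

theorem mk_orderIso_le_continuum : #(α ≃o α) ≤ 𝔠 := by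
  choose M hMc hMcover hMagree using exists_countable_agreesAbove_cover hS hN hψ
  let graph : (α ≃o α) → {s : Set (α × α) // #s ≤ ℵ₀} := fun σ =>
    ⟨(fun m => (m, σ m)) '' M σ, le_aleph0_iff_set_countable.2 ((hMc σ).image _)⟩
  have hgraph : Function.Injective graph := by
    intro σ τ h
    have hsub : ∀ m ∈ M σ, m ∈ M τ ∧ σ m = τ m := fun m hm => by
      have : (m, σ m) ∈ (graph τ).1 := h ▸ mem_image_of_mem (fun m => (m, σ m)) hm
      obtain ⟨m', hm', hmm'⟩ := this
      obtain ⟨rfl, hστ⟩ := Prod.mk.inj hmm'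
      exact ⟨hm', hστ.symm⟩
    exact OrderIso.ext_of_agreesAbove hS.isTreeHt (hMcover σ) (hMagree σ)
      (fun m hm => hMagree τ m (hsub m hm).1) fun m hm => (hsub m hm).2
  have hα := hS.mk_le_continuum
  calc #(α ≃o α) ≤ #{s : Set (α × α) // #s ≤ ℵ₀} := mk_le_of_injective hgraph
    _ ≤ max #(α × α) ℵ₀ ^ ℵ₀ := mk_bounded_set_le _ _
    _ ≤ 𝔠 ^ ℵ₀ := by
      refine power_le_power_right (max_le ?_ aleph0_le_continuum)
      simpa [continuum_mul_self] using mul_le_mul' hα hα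
    _ = 𝔠 := continuum_power_aleph0

end Souslin

section PermuteCones

variable [PartialOrder α] {ht : α → Ordinal} {ψ : α → α → α → α}

def immSucc (ht : α → Ordinal) (t : α) : Set α := {s | t < s ∧ ht s = ht t + 1}

open Classical in
noncomputable def permuteCones (ht : α → Ordinal) (ψ : α → α → α → α) (t : α)
    (π : Equiv.Perm (immSucc ht t)) (z : α) : α :=
  if h : ∃ s : immSucc ht t, (s : α) ≤ z then ψ h.choose (π h.choose) z else z

theorem immSucc_ht_eq {t : α} (s s' : immSucc ht t) : ht s = ht s' := s.2.2.trans s'.2.2.symm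

variable (hT : IsTreeHt ht) {t : α}
include hT

theorem IsTreeHt.eq_of_immSucc_le {s s' : immSucc ht t} {z : α} (hs : (s : α) ≤ z)
    (hs' : (s' : α) ≤ z) : s = s' :=
  Subtype.ext (hT.eq_of_le_of_le_of_ht_eq hs hs' (immSucc_ht_eq s s'))

theorem permuteCones_of_le (π : Equiv.Perm (immSucc ht t)) {s : immSucc ht t} {z : α}
    (hs : (s : α) ≤ z) : permuteCones ht ψ t π z = ψ s (π s) z := by
  have h : ∃ s : immSucc ht t, (s : α) ≤ z := ⟨s, hs⟩
  rw [permuteCones, dif_pos h, hT.eq_of_immSucc_le h.choose_spec hs]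

omit hT in
theorem permuteCones_of_forall_not_le (π : Equiv.Perm (immSucc ht t)) {z : α}
    (hz : ∀ s : immSucc ht t, ¬ (s : α) ≤ z) : permuteCones ht ψ t π z = z := by
  rw [permuteCones, dif_neg (not_exists.2 hz)]

variable (hψ : CoherentFam ht ψ)
include hψ

theorem permuteCones_symm_apply (π : Equiv.Perm (immSucc ht t)) (z : α) :
    permuteCones ht ψ t π.symm (permuteCones ht ψ t π z) = z := by
  by_cases hz : ∃ s : immSucc ht t, (s : α) ≤ z
  · obtain ⟨s, hs⟩ := hz
    have hπs := immSucc_ht_eq s (π s)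
    rw [permuteCones_of_le hT π hs, permuteCones_of_le hT π.symm (hψ.maps s (π s) z hπs hs).1,
      Equiv.symm_apply_apply, hψ.comm _ _ _ z hπs hπs.symm hs, hψ.refl s z hs]
  · rw [permuteCones_of_forall_not_le π (not_exists.1 hz),
      permuteCones_of_forall_not_le π.symm (not_exists.1 hz)]

theorem permuteCones_apply_immSucc (π : Equiv.Perm (immSucc ht t)) (s : immSucc ht t) :
    permuteCones ht ψ t π s = π s := by
  rw [permuteCones_of_le hT π le_rfl, hψ.apply_self hT (immSucc_ht_eq s (π s))]

theorem permuteCones_monotone (π : Equiv.Perm (immSucc ht t)) :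
    Monotone (permuteCones ht ψ t π) := by
  intro z w hzw
  by_cases hz : ∃ s : immSucc ht t, (s : α) ≤ z
  · obtain ⟨s, hs⟩ := hz
    have hπs := immSucc_ht_eq s (π s)
    rw [permuteCones_of_le hT π hs, permuteCones_of_le hT π (hs.trans hzw)]
    exact (hψ.mono s (π s) z w hπs hs (hs.trans hzw)).1 hzw
  rw [permuteCones_of_forall_not_le π (not_exists.1 hz)]
  by_cases hw : ∃ s : immSucc ht t, (s : α) ≤ w
  · obtain ⟨s, hs⟩ := hw
    have hπs := immSucc_ht_eq s (π s)
    have hzs : z < s := ((hT.le_total_of_le hzw hs).resolve_right fun h => hz ⟨s, h⟩).lt_of_ne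
      fun h => hz ⟨s, h.ge⟩
    rw [permuteCones_of_le hT π hs]
    exact (hT.le_of_lt_of_ht_eq_add_one hzs s.2.1 s.2.2).trans
      ((π s).2.1.le.trans (hψ.maps s (π s) w hπs hs).1)
  · rwa [permuteCones_of_forall_not_le π (not_exists.1 hw)]

noncomputable def permuteConesIso (π : Equiv.Perm (immSucc ht t)) : α ≃o α where
  toFun := permuteCones ht ψ t π
  invFun := permuteCones ht ψ t π.symm
  left_inv := permuteCones_symm_apply hT hψ π
  right_inv z := by simpa using permuteCones_symm_apply hT hψ π.symm z
  map_rel_iff' {a b} := ⟨fun h => by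
    simpa [permuteCones_symm_apply hT hψ π] using permuteCones_monotone hT hψ π.symm h,
    fun h => permuteCones_monotone hT hψ π h⟩

theorem permuteConesIso_injective : Function.Injective (permuteConesIso hT hψ (t := t)) := by
  intro π π' h
  ext s
  have := DFunLike.congr_fun h (s : α)
  change permuteCones ht ψ t π s = permuteCones ht ψ t π' s at this
  rwa [permuteCones_apply_immSucc hT hψ, permuteCones_apply_immSucc hT hψ] at this

end PermuteCones

theorem continuum_le_mk_orderIso [PartialOrder α] {ht : α → Ordinal} {ψ : α → α → α → α}
    (hT : IsTreeHt ht) (hψ : CoherentFam ht ψ) (hA : Aleph0Splitting ht) (t : α) :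
    𝔠 ≤ #(α ≃o α) := by
  have : Infinite (immSucc ht t) := (hA t).1.to_subtype
  have : Countable (immSucc ht t) := (hA t).2.to_subtype
  calc 𝔠 = #(Equiv.Perm (immSucc ht t)) := by
        rw [mk_perm_eq_two_power, mk_eq_aleph0, two_power_aleph0]
    _ ≤ #(α ≃o α) := mk_le_of_injective (permuteConesIso_injective hT hψ)

/-- The automorphism group of a strongly homogeneous Souslin tree has exactly `2 ^ ℵ₀`
elements. -/
theorem automorphism_group_card [PartialOrder α] (ht : α → Ordinal)
    (hS : IsSouslinTree ht) (hN : IsNormalTree ht) (hA : Aleph0Splitting ht)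
    (ψ : α → α → α → α) (hψ : CoherentFam ht ψ) :
    #(α ≃o α) = 2 ^ Cardinal.aleph0 := by
  obtain ⟨root, -⟩ := hN.1
  rw [two_power_aleph0]
  exact (mk_orderIso_le_continuum hS hN hψ).antisymm
    (continuum_le_mk_orderIso hS.isTreeHt hψ hA root)
end
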